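/- arXiv:math/0604488 — 5 statements merged into one kernel-verified Lean document; each statement's English description precedes it below -/
import Mathlib

section
/- Let Σ be an r×r real matrix, I, J, K pairwise disjoint subsets of {1,...,r} with |I| = |J| = m and |K| ≤ m - 1. If Σ_{(I∪K)×(J∪K)} = M · Σ_{K×K}^{-1} · N where M is the (I∪K)×K block [Σ_{I×K}; Σ_{K×K}] and N is the K×(K∪J) block [Σ_{K×K}, Σ_{K×J}] (with Σ_{K×K} invertible), then det(Σ_{I×J}) = 0. -/
/-! The factorisation writes Σ_{I×J}, a minor of Σ_{(I∪K)×(J∪K)}, as a product through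
`K`, so its rank is at most `|K| < m` and its determinant vanishes. -/

open Matrix Finset

namespace Matrix

variable {𝕜 n κ : Type*} [Field 𝕜] [Fintype n] [DecidableEq n] [Fintype κ]

theorem det_mul_eq_zero_of_card_lt (A : Matrix n κ 𝕜) (B : Matrix κ n 𝕜)
    (h : Fintype.card κ < Fintype.card n) : (A * B).det = 0 := by
  by_contra hdet
  have hrank : (A * B).rank = Fintype.card n :=
    rank_of_isUnit _ ((isUnit_iff_isUnit_det _).mpr (isUnit_iff_ne_zero.mpr hdet))
  have hle : (A * B).rank ≤ Fintype.card κ := (rank_mul_le_right A B).trans B.rank_le_card_height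
  omega

theorem det_submatrix_mul_eq_zero_of_card_lt {α β : Type*} (A : Matrix α κ 𝕜) (B : Matrix κ β 𝕜)
    (f : n → α) (g : n → β) (h : Fintype.card κ < Fintype.card n) :
    ((A * B).submatrix f g).det = 0 := by
  rw [submatrix_mul A B f id g Function.bijective_id]
  exact det_mul_eq_zero_of_card_lt _ _ h

end Matrix

theorem det_IJ_eq_zero_of_factors_through_K_general {r m : ℕ}
    (S : Matrix (Fin r) (Fin r) ℝ)
    (I J K : Finset (Fin r))
    (hI : I.card = m) (hJ : J.card = m)
    (hK : (K.card : ℤ) ≤ (m : ℤ) - 1)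
    (hfact : S.submatrix (Subtype.val : ↥(I ∪ K) → Fin r) (Subtype.val : ↥(J ∪ K) → Fin r)
      = S.submatrix (Subtype.val : ↥(I ∪ K) → Fin r) (Subtype.val : ↥K → Fin r)
        * (S.submatrix (Subtype.val : ↥K → Fin r) (Subtype.val : ↥K → Fin r))⁻¹
        * S.submatrix (Subtype.val : ↥K → Fin r) (Subtype.val : ↥(J ∪ K) → Fin r)) :
    (S.submatrix (I.orderEmbOfFin hI) (J.orderEmbOfFin hJ)).det = 0 := by
  let f : Fin m → ↥(I ∪ K) := fun i => ⟨_, mem_union_left K (I.orderEmbOfFin_mem hI i)⟩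
  let g : Fin m → ↥(J ∪ K) := fun j => ⟨_, mem_union_left K (J.orderEmbOfFin_mem hJ j)⟩
  have hminor : S.submatrix (I.orderEmbOfFin hI) (J.orderEmbOfFin hJ)
      = (S.submatrix Subtype.val Subtype.val).submatrix f g := rfl
  have hcard : Fintype.card ↥K < Fintype.card (Fin m) := by
    rw [Fintype.card_coe, Fintype.card_fin]
    omega
  rw [hminor, hfact]
  exact det_submatrix_mul_eq_zero_of_card_lt _ _ f g hcard

theorem det_IJ_eq_zero_of_factors_through_K {r m : ℕ}
    (S : Matrix (Fin r) (Fin r) ℝ)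
    (I J K : Finset (Fin r))
    (hIJ : Disjoint I J) (hIK : Disjoint I K) (hJK : Disjoint J K)
    (hI : I.card = m) (hJ : J.card = m)
    (hK : (K.card : ℤ) ≤ (m : ℤ) - 1)
    (hKinv : IsUnit (S.submatrix (Subtype.val : ↥K → Fin r) (Subtype.val : ↥K → Fin r)))
    (hfact : S.submatrix (Subtype.val : ↥(I ∪ K) → Fin r) (Subtype.val : ↥(J ∪ K) → Fin r)
      = S.submatrix (Subtype.val : ↥(I ∪ K) → Fin r) (Subtype.val : ↥K → Fin r)
        * (S.submatrix (Subtype.val : ↥K → Fin r) (Subtype.val : ↥K → Fin r))⁻¹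
        * S.submatrix (Subtype.val : ↥K → Fin r) (Subtype.val : ↥(J ∪ K) → Fin r)) :
    (S.submatrix (I.orderEmbOfFin hI) (J.orderEmbOfFin hJ)).det = 0 :=
  det_IJ_eq_zero_of_factors_through_K_general S I J K hI hJ hK hfact
end

section
/- Let T be a lower triangular r×r real matrix with nonzero diagonal entries, W = T Tᵀ, and let c ≤ m ≤ r with J̄ ⊆ {m+1,...,r} of cardinality m−c. Then det(W_{[m]×([c]∪J̄)}) = (∏_{i=1}^{c} t_{ii}²) · (∏_{j=c+1}^{m} t_{jj}) · det(T_{J̄×{c+1,...,m}}). -/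
open Matrix Finset

theorem det_minor_cholesky_factorization {r m c : ℕ} (hc : c ≤ m) (hm : m ≤ r)
    (T : Matrix (Fin r) (Fin r) ℝ)
    (hlow : ∀ i j : Fin r, i < j → T i j = 0)
    (hdiag : ∀ i : Fin r, T i i ≠ 0)
    (Jb : Finset (Fin r)) (hJbsub : ∀ j ∈ Jb, m ≤ (j : ℕ))
    (hJb : Jb.card = m - c) :
    ((T * Tᵀ).submatrix
        (Sum.elim (fun i : Fin c => (⟨(i : ℕ), by omega⟩ : Fin r))
          (fun i : Fin (m - c) => (⟨c + (i : ℕ), by omega⟩ : Fin r)))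
        (Sum.elim (fun i : Fin c => (⟨(i : ℕ), by omega⟩ : Fin r))
          (fun i : Fin (m - c) => Jb.orderEmbOfFin hJb i))).det
      = (∏ i : Fin c, (T ⟨(i : ℕ), by omega⟩ ⟨(i : ℕ), by omega⟩) ^ 2)
        * (∏ j : Fin (m - c), T ⟨c + (j : ℕ), by omega⟩ ⟨c + (j : ℕ), by omega⟩)
        * (T.submatrix (fun i : Fin (m - c) => Jb.orderEmbOfFin hJb i)
            (fun j : Fin (m - c) => (⟨c + (j : ℕ), by omega⟩ : Fin r))).det := by
  classical
  set ρ : Sum (Fin c) (Fin (m - c)) → Fin r :=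
    Sum.elim (fun i : Fin c => (⟨(i : ℕ), by omega⟩ : Fin r))
      (fun i : Fin (m - c) => (⟨c + (i : ℕ), by omega⟩ : Fin r)) with hρ
  set κ : Sum (Fin c) (Fin (m - c)) → Fin r :=
    Sum.elim (fun i : Fin c => (⟨(i : ℕ), by omega⟩ : Fin r))
      (fun i : Fin (m - c) => Jb.orderEmbOfFin hJb i) with hκ
  have hmc : c + (m - c) = m := by omega
  set e : Sum (Fin c) (Fin (m - c)) ≃ Fin m :=
    finSumFinEquiv.trans (finCongr hmc) with he
  have hevalL : ∀ i : Fin c, ((e (Sum.inl i) : Fin m) : ℕ) = (i : ℕ) := by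
    intro i; simp [he, finSumFinEquiv]
  have hevalR : ∀ i : Fin (m - c), ((e (Sum.inr i) : Fin m) : ℕ) = c + (i : ℕ) := by
    intro i; simp [he, finSumFinEquiv]
  have hidxL : ∀ i : Fin c, Fin.castLE hm (e (Sum.inl i)) = (⟨(i : ℕ), by omega⟩ : Fin r) :=
    fun i => Fin.ext (by simpa using hevalL i)
  have hidxR : ∀ i : Fin (m - c),
      Fin.castLE hm (e (Sum.inr i)) = (⟨c + (i : ℕ), by omega⟩ : Fin r) :=
    fun i => Fin.ext (by simpa using hevalR i)
  have hρval : ∀ u, (ρ u : ℕ) = ((e u : Fin m) : ℕ) := by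
    rintro (i | i) <;> simp [hevalL, hevalR, hρ]
  have hρlt : ∀ u, (ρ u : ℕ) < m := fun u => by rw [hρval]; exact (e u).2
  -- factor the matrix
  have hfact : (T * Tᵀ).submatrix ρ κ =
      (T.submatrix ρ (fun u => Fin.castLE hm (e u))) *
        (T.submatrix κ (fun u => Fin.castLE hm (e u)))ᵀ := by
    ext s t
    simp only [Matrix.submatrix_apply, Matrix.mul_apply, Matrix.transpose_apply]
    have hzero : ∀ k : Fin r, k ∉ Finset.univ.map (Fin.castLEEmb hm) →
        T (ρ s) k * T (κ t) k = 0 := by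
      intro k hk
      have hkm : m ≤ (k : ℕ) := by
        by_contra h
        exact hk (Finset.mem_map.mpr ⟨⟨(k : ℕ), by omega⟩, Finset.mem_univ _, by
          simp [Fin.castLEEmb, Fin.ext_iff]⟩)
      have : T (ρ s) k = 0 := hlow _ _ (by
        rw [Fin.lt_iff_val_lt_val]; exact lt_of_lt_of_le (hρlt s) hkm)
      rw [this, zero_mul]
    rw [← Finset.sum_subset (Finset.subset_univ _) (fun k _ hk => hzero k hk),
      Finset.sum_map]
    rw [← Equiv.sum_comp e (fun k : Fin m => T (ρ s) ((Fin.castLEEmb hm) k) *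
      T (κ t) ((Fin.castLEEmb hm) k))]
    rfl
  rw [hfact, Matrix.det_mul, Matrix.det_transpose]
  -- compute det of the first factor
  have hρe : ρ = (fun k : Fin m => Fin.castLE hm k) ∘ e := by
    funext u; exact Fin.ext (by simpa using hρval u)
  have h1 : (T.submatrix ρ (fun u => Fin.castLE hm (e u))).det =
      ∏ k : Fin m, T (Fin.castLE hm k) (Fin.castLE hm k) := by
    rw [hρe]
    have : (T.submatrix ((fun k : Fin m => Fin.castLE hm k) ∘ e)
        (fun u => Fin.castLE hm (e u))) =
        (T.submatrix (Fin.castLE hm) (Fin.castLE hm)).submatrix e e := rfl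
    rw [this, Matrix.det_submatrix_equiv_self]
    rw [Matrix.det_of_lowerTriangular]
    · rfl
    · intro i j hij
      refine hlow _ _ ?_
      rw [OrderDual.toDual_lt_toDual] at hij
      rw [Fin.lt_def] at hij ⊢
      simpa using hij
  -- compute det of the second factor: block lower triangular
  have h2 : (T.submatrix κ (fun u => Fin.castLE hm (e u))).det =
      (∏ i : Fin c, (T ⟨(i : ℕ), by omega⟩ ⟨(i : ℕ), by omega⟩))
        * (T.submatrix (fun i : Fin (m - c) => Jb.orderEmbOfFin hJb i)
            (fun j : Fin (m - c) => (⟨c + (j : ℕ), by omega⟩ : Fin r))).det := by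
    set Q := T.submatrix κ (fun u => Fin.castLE hm (e u)) with hQ
    have hblocks : Q = Matrix.fromBlocks Q.toBlocks₁₁ Q.toBlocks₁₂ Q.toBlocks₂₁
        Q.toBlocks₂₂ := (Matrix.fromBlocks_toBlocks Q).symm
    have h12 : Q.toBlocks₁₂ = 0 := by
      ext i j
      simp only [Matrix.toBlocks₁₂, Matrix.of_apply, hQ, Matrix.submatrix_apply,
        Matrix.zero_apply]
      refine hlow _ _ ?_
      rw [Fin.lt_iff_val_lt_val]
      simp only [hκ, Sum.elim_inl]
      have := hevalR j
      simp only [Fin.coe_castLE]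
      omega
    rw [hblocks, h12, Matrix.det_fromBlocks_zero₁₂]
    congr 1
    · rw [Matrix.det_of_lowerTriangular]
      · apply Finset.prod_congr rfl
        intro i _
        simp only [Matrix.toBlocks₁₁, Matrix.of_apply, hQ, Matrix.submatrix_apply, hκ,
          Sum.elim_inl]
        rw [hidxL i]
      · intro i j hij
        simp only [Matrix.toBlocks₁₁, Matrix.of_apply, hQ, Matrix.submatrix_apply, hκ,
          Sum.elim_inl]
        refine hlow _ _ ?_
        rw [Fin.lt_iff_val_lt_val]
        have := hevalL j
        simp only [Fin.coe_castLE]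
        rw [OrderDual.toDual_lt_toDual, Fin.lt_def] at hij
        omega
  rw [h1, h2]
  have hsplit : ∏ k : Fin m, T (Fin.castLE hm k) (Fin.castLE hm k) =
      (∏ i : Fin c, (T ⟨(i : ℕ), by omega⟩ ⟨(i : ℕ), by omega⟩))
        * (∏ j : Fin (m - c), T ⟨c + (j : ℕ), by omega⟩ ⟨c + (j : ℕ), by omega⟩) := by
    rw [← Equiv.prod_comp e (fun k : Fin m => T (Fin.castLE hm k) (Fin.castLE hm k)),
      Fintype.prod_sum_type]
    congr 1
  rw [hsplit, Finset.prod_pow]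
  ring
end

section
/- Let W₁,...,W_m be independent with W_i ~ χ²_{n−i+1} (n ≥ m), let c ≤ m, and let Z be an (m−c)×(m−c) matrix of i.i.d. standard Gaussians independent of (W₁,...,W_m). Then D := (∏_{i=1}^{c} W_i) · (∏_{i=c+1}^{m} √(W_i)) · det(Z) satisfies E[D²] = (n!/(n−m)!) · ((n+2)!/(n+2−c)!) · (m−c)!. -/
/-!
The integrand equals `(∏_{i<c} W_i²) (∏_{i≥c} W_i) det(Z)²` almost surely, and the two factors are
independent. A `χ²_d` variable (the law `Γ(d/2, 1/2)`) has `E[W] = d` and `E[W²] = d (d + 2)`, which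
with `d = n - i` yields the two descending factorials. Expanding `det(Z)²` over pairs of
permutations `(σ, τ)`, each term is a product of independent entries, and it has expectation
`[σ = τ]` because the entries are centred with unit variance; hence `E[det(Z)²] = (m - c)!`.
-/

open Matrix Finset MeasureTheory ProbabilityTheory

lemma prod_range_natCast_sub {k n : ℕ} (h : k ≤ n) :
    ∏ i ∈ range k, ((n : ℝ) - i) = n.factorial / (n - k).factorial := by
  rw [eq_div_iff (by positivity), ← Nat.factorial_mul_descFactorial h,
    Nat.descFactorial_eq_prod_range, Nat.cast_mul, Nat.cast_prod, mul_comm]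
  congr 1
  exact prod_congr rfl fun i hi => by rw [Nat.cast_sub (by simp at hi; omega)]

lemma prod_chiSquared_moments_eq {n m c : ℕ} (hc : c ≤ m) (hmn : m ≤ n) :
    ∏ i : Fin m, (if (i : ℕ) < c then ((n : ℝ) - i) * ((n : ℝ) - i + 2) else (n : ℝ) - i)
      = n.factorial / (n - m).factorial * ((n + 2).factorial / (n + 2 - c).factorial) := by
  have hsplit : ∀ i : ℕ, (if i < c then ((n : ℝ) - i) * ((n : ℝ) - i + 2) else (n : ℝ) - i)
      = ((n : ℝ) - i) * if i < c then (((n + 2 : ℕ) : ℝ) - i) else 1 := by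
    intro i; split_ifs <;> push_cast <;> ring
  simp_rw [hsplit]
  rw [prod_mul_distrib, Fin.prod_univ_eq_prod_range (fun i => (n : ℝ) - i),
    Fin.prod_univ_eq_prod_range (fun i => if i < c then (((n + 2 : ℕ) : ℝ) - i) else 1),
    ← prod_filter, show (range m).filter (· < c) = range c by ext; simp; omega,
    prod_range_natCast_sub hmn, prod_range_natCast_sub (by omega)]

lemma sq_prod_filter_mul_prod_filter_sqrt {ι : Type*} (s : Finset ι) (p : ι → Prop)
    [DecidablePred p] (w : ι → ℝ) (hw : ∀ i ∈ s, 0 ≤ w i) :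
    ((∏ i ∈ s with p i, w i) * ∏ i ∈ s with ¬p i, √(w i)) ^ 2
      = ∏ i ∈ s, if p i then w i ^ 2 else w i := by
  rw [mul_pow, ← prod_pow, ← prod_pow, prod_ite]
  congr 1
  exact prod_congr rfl fun i hi => Real.sq_sqrt (hw i (mem_filter.1 hi).1)

namespace Matrix

variable {n R : Type*} [Fintype n] [DecidableEq n]

lemma prod_perm_apply_eq_prod_ite [CommMonoid R] (M : Matrix n n R) (σ : Equiv.Perm n) :
    ∏ i, M (σ i) i = ∏ p : n × n, if σ p.2 = p.1 then M p.1 p.2 else 1 := by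
  rw [Fintype.prod_prod_type_right]
  simp [Finset.prod_ite_eq]

lemma det_sq_eq_sum_prod_ite [CommRing R] (M : Matrix n n R) :
    M.det ^ 2 = ∑ σ : Equiv.Perm n, ∑ τ : Equiv.Perm n, ((σ.sign * τ.sign : ℤˣ) : ℤ) •
      ∏ p : n × n,
        (if σ p.2 = p.1 then M p.1 p.2 else 1) * (if τ p.2 = p.1 then M p.1 p.2 else 1) := by
  simp_rw [sq, det_apply, sum_mul_sum, prod_mul_distrib, ← prod_perm_apply_eq_prod_ite,
    Units.smul_def, smul_mul_smul_comm, Units.val_mul]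

end Matrix

namespace ProbabilityTheory

lemma ae_nonneg_gammaMeasure (a r : ℝ) : ∀ᵐ x ∂gammaMeasure a r, 0 ≤ x := by
  rw [ae_iff, show {x : ℝ | ¬0 ≤ x} = Set.Iio 0 from Set.ext fun _ => not_le, gammaMeasure,
    withDensity_apply _ measurableSet_Iio, lintegral_gammaPDF_of_nonpos le_rfl]

lemma integral_pow_gammaMeasure {a r : ℝ} (ha : 0 < a) (hr : 0 < r) (k : ℕ) :
    ∫ x, x ^ k ∂gammaMeasure a r = Real.Gamma (a + k) / (Real.Gamma a * r ^ k) := by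
  have hdens x : (gammaPDF a r x).toReal = gammaPDFReal a r x :=
    ENNReal.toReal_ofReal (gammaPDFReal_nonneg ha hr x)
  have hIoi : ∀ x ∈ Set.Ioi (0 : ℝ), gammaPDFReal a r x * x ^ k
      = r ^ a / Real.Gamma a * (x ^ (a + k - 1) * Real.exp (-(r * x))) := fun x (hx : 0 < x) => by
    rw [gammaPDFReal, if_pos hx.le, show a + k - 1 = (a - 1) + k by ring, Real.rpow_add hx,
      Real.rpow_natCast]
    ring
  calc ∫ x, x ^ k ∂gammaMeasure a r = ∫ x in Set.Ici 0, gammaPDFReal a r x * x ^ k := by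
        rw [gammaMeasure, integral_withDensity_eq_integral_toReal_smul (f := gammaPDF a r)
          (measurable_gammaPDFReal a r).ennreal_ofReal (ae_of_all _ fun _ => ENNReal.ofReal_lt_top),
          setIntegral_eq_integral_of_forall_compl_eq_zero fun x hx => by
            simp [gammaPDFReal, show ¬0 ≤ x from hx]]
        simp only [hdens, smul_eq_mul]
    _ = r ^ a / Real.Gamma a * ∫ x in Set.Ioi 0, x ^ (a + k - 1) * Real.exp (-(r * x)) := by
        rw [integral_Ici_eq_integral_Ioi, setIntegral_congr_fun measurableSet_Ioi hIoi,
          integral_const_mul]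
    _ = Real.Gamma (a + k) / (Real.Gamma a * r ^ k) := by
        rw [Real.integral_rpow_mul_exp_neg_mul_Ioi (by positivity) hr,
          Real.div_rpow zero_le_one hr.le, Real.one_rpow, Real.rpow_add hr, Real.rpow_natCast]
        have := Real.Gamma_pos_of_pos ha
        field_simp

lemma integral_id_gammaMeasure {a r : ℝ} (ha : 0 < a) (hr : 0 < r) :
    ∫ x, x ∂gammaMeasure a r = a / r := by
  have := integral_pow_gammaMeasure ha hr 1
  simp only [pow_one, Nat.cast_one] at this
  rw [this, Real.Gamma_add_one ha.ne']
  have := Real.Gamma_pos_of_pos ha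
  field_simp

lemma integral_sq_gammaMeasure {a r : ℝ} (ha : 0 < a) (hr : 0 < r) :
    ∫ x, x ^ 2 ∂gammaMeasure a r = a * (a + 1) / r ^ 2 := by
  rw [integral_pow_gammaMeasure ha hr, Nat.cast_two, show a + 2 = a + 1 + 1 by ring,
    Real.Gamma_add_one (by positivity), Real.Gamma_add_one ha.ne']
  have := Real.Gamma_pos_of_pos ha
  field_simp

variable {Ω : Type*} [MeasurableSpace Ω] {μ : Measure Ω}

lemma iIndepFun.indepFun_sumElim {ι κ β : Type*} [Fintype ι] [Fintype κ] [MeasurableSpace β]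
    {f : ι → Ω → β} {g : κ → Ω → β} (h : iIndepFun (Sum.elim f g) μ)
    (hf : ∀ i, Measurable (f i)) (hg : ∀ j, Measurable (g j)) :
    IndepFun (fun ω i => f i ω) (fun ω j => g j ω) μ := by
  have hST := h.indepFun_finset (univ.map .inl) (univ.map .inr)
    (by simp [Finset.disjoint_left]) (Sum.forall.2 ⟨hf, hg⟩)
  exact hST.comp (φ := fun v i => v ⟨.inl i, mem_map_of_mem _ (mem_univ i)⟩)
    (ψ := fun v j => v ⟨.inr j, mem_map_of_mem _ (mem_univ j)⟩)
    (measurable_pi_lambda _ fun _ => measurable_pi_apply _)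
    (measurable_pi_lambda _ fun _ => measurable_pi_apply _)

lemma iIndepFun.integrable_fun_prod_comp {ι : Type*} [Fintype ι] {𝓧 : ι → Type*}
    {m𝓧 : ∀ i, MeasurableSpace (𝓧 i)} {X : (i : ι) → Ω → 𝓧 i} {f : (i : ι) → 𝓧 i → ℝ}
    (hX : iIndepFun X μ) (mX : ∀ i, AEMeasurable (X i) μ)
    (hf : ∀ i, AEStronglyMeasurable (f i) (μ.map (X i)))
    (hint : ∀ i, Integrable (fun ω => f i (X i ω)) μ) :
    Integrable (fun ω => ∏ i, f i (X i ω)) μ := by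
  have := hX.isProbabilityMeasure
  have hprod :
      Integrable (fun x : (i : ι) → 𝓧 i => ∏ i, f i (x i)) (μ.map fun ω i => X i ω) := by
    rw [hX.map_fun_eq_pi_map mX]
    exact .fintype_prod_dep fun i => (integrable_map_measure (hf i) (mX i)).2 (hint i)
  exact hprod.comp_aemeasurable (aemeasurable_pi_lambda _ mX)

lemma iIndepFun.integral_prod_mul_det_sq {ι k : Type*} [Fintype ι] [Fintype k] [DecidableEq k]
    {W : ι → Ω → ℝ} {Z : Ω → Matrix k k ℝ}
    (hindep : iIndepFun (Sum.elim W fun (p : k × k) ω => Z ω p.1 p.2) μ)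
    (hmeasW : ∀ i, Measurable (W i)) (hmeasZ : ∀ i j, Measurable fun ω => Z ω i j)
    {g : ι → ℝ → ℝ} (hg : ∀ i, Measurable (g i)) :
    ∫ ω, (∏ i, g i (W i ω)) * (Z ω).det ^ 2 ∂μ
      = (∏ i, ∫ ω, g i (W i ω) ∂μ) * ∫ ω, (Z ω).det ^ 2 ∂μ := by
  have hdet : Measurable fun M : k → k → ℝ => (Matrix.of M).det ^ 2 := by
    simp_rw [Matrix.det_apply]
    fun_prop
  have hX : Measurable fun ω => ∏ i, g i (W i ω) :=
    Finset.measurable_prod _ fun i _ => (hg i).comp (hmeasW i)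
  have hY : Measurable fun ω => (Z ω).det ^ 2 :=
    hdet.comp (measurable_pi_lambda _ fun i => measurable_pi_lambda _ (hmeasZ i))
  have hXY : IndepFun (fun ω => ∏ i, g i (W i ω)) (fun ω => (Z ω).det ^ 2) μ := by
    convert (hindep.indepFun_sumElim hmeasW fun p => hmeasZ p.1 p.2).comp
      (φ := fun w => ∏ i, g i (w i)) (ψ := fun z => (Matrix.of fun i j => z (i, j)).det ^ 2)
      (by fun_prop) (hdet.comp (measurable_pi_lambda _ fun i => measurable_pi_lambda _ fun j =>
        measurable_pi_apply (i, j))) using 1 <;> rfl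
  have hWi : iIndepFun W μ := (hindep.precomp Sum.inl_injective :)
  rw [hXY.integral_fun_mul_eq_mul_integral hX.aestronglyMeasurable hY.aestronglyMeasurable,
    hWi.integral_fun_prod_comp (fun i => (hmeasW i).aemeasurable)
      fun i => (hg i).aestronglyMeasurable]

lemma integrable_ite_mul_ite [IsFiniteMeasure μ] {X : Ω → ℝ} (hX : MemLp X 2 μ)
    (a b : Prop) [Decidable a] [Decidable b] :
    Integrable (fun ω => (if a then X ω else 1) * (if b then X ω else 1)) μ := by
  by_cases ha : a <;> by_cases hb : b <;>
    simp [ha, hb, ← sq, hX.integrable one_le_two, hX.integrable_sq]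

lemma integral_ite_mul_ite [IsProbabilityMeasure μ] {X : Ω → ℝ} (hmean : ∫ ω, X ω ∂μ = 0)
    (hvar : ∫ ω, X ω ^ 2 ∂μ = 1) (a b : Prop) [Decidable a] [Decidable b] :
    ∫ ω, (if a then X ω else 1) * (if b then X ω else 1) ∂μ = if a ↔ b then 1 else 0 := by
  by_cases ha : a <;> by_cases hb : b <;> simp [ha, hb, ← sq, hmean, hvar]

theorem integral_det_sq_eq_factorial {n : Type*} [Fintype n] [DecidableEq n]
    {Z : Ω → Matrix n n ℝ} (hindep : iIndepFun (fun (p : n × n) ω => Z ω p.1 p.2) μ)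
    (hL2 : ∀ i j, MemLp (fun ω => Z ω i j) 2 μ) (hmean : ∀ i j, ∫ ω, Z ω i j ∂μ = 0)
    (hvar : ∀ i j, ∫ ω, Z ω i j ^ 2 ∂μ = 1) :
    ∫ ω, (Z ω).det ^ 2 ∂μ = (Fintype.card n).factorial := by
  have := hindep.isProbabilityMeasure
  let F (σ τ : Equiv.Perm n) (p : n × n) (x : ℝ) : ℝ :=
    (if σ p.2 = p.1 then x else 1) * (if τ p.2 = p.1 then x else 1)
  have hmeas : ∀ p : n × n, AEMeasurable (fun ω => Z ω p.1 p.2) μ := fun p =>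
    (hL2 p.1 p.2).aestronglyMeasurable.aemeasurable
  have hF : ∀ σ τ p, AEStronglyMeasurable (F σ τ p) (μ.map fun ω => Z ω p.1 p.2) := by
    intro σ τ p
    refine Measurable.aestronglyMeasurable ?_
    simp only [F]
    split_ifs <;> fun_prop
  have hint : ∀ σ τ, Integrable (fun ω => ∏ p, F σ τ p (Z ω p.1 p.2)) μ := fun σ τ =>
    hindep.integrable_fun_prod_comp hmeas (hF σ τ)
      fun p => integrable_ite_mul_ite (hL2 p.1 p.2) _ _
  have hterm : ∀ σ τ, ∫ ω, ∏ p, F σ τ p (Z ω p.1 p.2) ∂μ = if σ = τ then 1 else 0 := by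
    intro σ τ
    simp only [hindep.integral_fun_prod_comp hmeas (hF σ τ), F,
      integral_ite_mul_ite (hmean _ _) (hvar _ _), Fintype.prod_boole]
    congr 1
    refine propext ⟨fun h => Equiv.ext fun i => ((h (σ i, i)).1 rfl).symm, ?_⟩
    rintro rfl
    simp
  calc ∫ ω, (Z ω).det ^ 2 ∂μ
      = ∫ ω, ∑ σ, ∑ τ, ((Equiv.Perm.sign σ * Equiv.Perm.sign τ : ℤˣ) : ℝ)
          * ∏ p, F σ τ p (Z ω p.1 p.2) ∂μ := by
        simp_rw [det_sq_eq_sum_prod_ite, zsmul_eq_mul]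
        rfl
    _ = ∑ σ, ∑ τ, ((Equiv.Perm.sign σ * Equiv.Perm.sign τ : ℤˣ) : ℝ) * if σ = τ then 1 else 0 := by
        rw [integral_finsetSum _ fun σ _ =>
          integrable_finsetSum _ fun τ _ => (hint σ τ).const_mul _]
        refine sum_congr rfl fun σ _ => ?_
        rw [integral_finsetSum _ fun τ _ => (hint σ τ).const_mul _]
        simp_rw [integral_const_mul, hterm]
    _ = (Fintype.card n).factorial := by
        simp only [mul_ite, mul_one, mul_zero, sum_ite_eq, mem_univ, if_true, Int.units_mul_self,
          Units.val_one, Int.cast_one, sum_const, card_univ, Fintype.card_perm, nsmul_eq_mul]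

theorem integral_det_sq_eq_factorial_of_gaussian {n : Type*} [Fintype n] [DecidableEq n]
    {Z : Ω → Matrix n n ℝ} (hindep : iIndepFun (fun (p : n × n) ω => Z ω p.1 p.2) μ)
    (hZ : ∀ i j, HasLaw (fun ω => Z ω i j) (gaussianReal 0 1) μ) :
    ∫ ω, (Z ω).det ^ 2 ∂μ = (Fintype.card n).factorial := by
  refine integral_det_sq_eq_factorial hindep (fun i j => ?_) (fun i j => ?_) (fun i j => ?_)
  · exact (memLp_map_measure_iff aestronglyMeasurable_id (hZ i j).aemeasurable).1
      ((hZ i j).map_eq ▸ memLp_id_gaussianReal 2)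
  · rw [(hZ i j).integral_eq, integral_id_gaussianReal]
  · rw [← Function.comp_def (fun x : ℝ => x ^ 2), (hZ i j).integral_comp (by fun_prop)]
    have := variance_fun_id_gaussianReal (μ := 0) (v := 1)
    rw [variance_eq_integral aemeasurable_id', integral_id_gaussianReal] at this
    simpa using this

end ProbabilityTheory

theorem second_moment_wishart_minor_representation_general
    {Ω : Type*} [MeasurableSpace Ω] (μ : Measure Ω)
    {n m c : ℕ} (hc : c ≤ m) (hmn : m ≤ n)
    (W : Fin m → Ω → ℝ) (Z : Ω → Matrix (Fin (m - c)) (Fin (m - c)) ℝ)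
    (hmeasW : ∀ i, Measurable (W i))
    (hmeasZ : ∀ i j, Measurable fun ω => Z ω i j)
    (hindep : iIndepFun
      (Sum.elim W (fun (p : Fin (m - c) × Fin (m - c)) ω => Z ω p.1 p.2)) μ)
    (hWdist : ∀ i : Fin m,
      Measure.map (W i) μ = gammaMeasure (((n : ℝ) - (i : ℕ)) / 2) (1 / 2))
    (hZdist : ∀ p : Fin (m - c) × Fin (m - c),
      Measure.map (fun ω => Z ω p.1 p.2) μ = gaussianReal 0 1) :
    ∫ ω, ((∏ i ∈ Finset.univ.filter (fun i : Fin m => (i : ℕ) < c), W i ω)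
          * (∏ i ∈ Finset.univ.filter (fun i : Fin m => c ≤ (i : ℕ)),
              Real.sqrt (W i ω))
          * (Z ω).det) ^ 2 ∂μ
      = ((n.factorial : ℝ) / ((n - m).factorial : ℝ))
        * (((n + 2).factorial : ℝ) / ((n + 2 - c).factorial : ℝ))
        * ((m - c).factorial : ℝ) := by
  have hW i : HasLaw (W i) (gammaMeasure (((n : ℝ) - (i : ℕ)) / 2) (1 / 2)) μ :=
    ⟨(hmeasW i).aemeasurable, hWdist i⟩
  have hZ i j : HasLaw (fun ω => Z ω i j) (gaussianReal 0 1) μ :=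
    ⟨(hmeasZ i j).aemeasurable, hZdist (i, j)⟩
  let g (i : Fin m) (x : ℝ) : ℝ := if (i : ℕ) < c then x ^ 2 else x
  have hg i : Measurable (g i) := by
    simp only [g]
    split_ifs <;> fun_prop
  have hsq : ∀ᵐ ω ∂μ, ((∏ i ∈ Finset.univ.filter (fun i : Fin m => (i : ℕ) < c), W i ω)
      * (∏ i ∈ Finset.univ.filter (fun i : Fin m => c ≤ (i : ℕ)), √(W i ω)) * (Z ω).det) ^ 2
      = (∏ i, g i (W i ω)) * (Z ω).det ^ 2 := by
    filter_upwards [ae_all_iff.2 fun i => ((hW i).ae_iff (by fun_prop)).2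
      (ae_nonneg_gammaMeasure _ _)] with ω hω
    simp_rw [← not_lt, mul_pow _ (Z ω).det]
    rw [sq_prod_filter_mul_prod_filter_sqrt _ _ _ fun i _ => hω i]
  have hmom i : ∫ ω, g i (W i ω) ∂μ
      = if (i : ℕ) < c then ((n : ℝ) - i) * ((n : ℝ) - i + 2) else (n : ℝ) - i := by
    have ha : 0 < ((n : ℝ) - i) / 2 := div_pos (sub_pos.2 (Nat.cast_lt.2 (by omega))) two_pos
    refine ((hW i).integral_comp (hg i).aestronglyMeasurable).trans ?_
    simp only [g]
    split_ifs
    · rw [integral_sq_gammaMeasure ha one_half_pos]; ring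
    · rw [integral_id_gammaMeasure ha one_half_pos]; ring
  rw [integral_congr_ae hsq, hindep.integral_prod_mul_det_sq hmeasW hmeasZ hg,
    integral_det_sq_eq_factorial_of_gaussian (hindep.precomp Sum.inr_injective) hZ]
  simp_rw [hmom, prod_chiSquared_moments_eq hc hmn, Fintype.card_fin]

theorem second_moment_wishart_minor_representation
    {Ω : Type*} [MeasurableSpace Ω] (μ : Measure Ω) [IsProbabilityMeasure μ]
    {n m c : ℕ} (hc : c ≤ m) (hmn : m ≤ n)
    (W : Fin m → Ω → ℝ) (Z : Ω → Matrix (Fin (m - c)) (Fin (m - c)) ℝ)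
    (hmeasW : ∀ i, Measurable (W i))
    (hmeasZ : ∀ i j, Measurable fun ω => Z ω i j)
    (hindep : iIndepFun
      (Sum.elim W (fun (p : Fin (m - c) × Fin (m - c)) ω => Z ω p.1 p.2)) μ)
    (hWdist : ∀ i : Fin m,
      Measure.map (W i) μ = gammaMeasure (((n : ℝ) - (i : ℕ)) / 2) (1 / 2))
    (hZdist : ∀ p : Fin (m - c) × Fin (m - c),
      Measure.map (fun ω => Z ω p.1 p.2) μ = gaussianReal 0 1) :
    ∫ ω, ((∏ i ∈ Finset.univ.filter (fun i : Fin m => (i : ℕ) < c), W i ω)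
          * (∏ i ∈ Finset.univ.filter (fun i : Fin m => c ≤ (i : ℕ)),
              Real.sqrt (W i ω))
          * (Z ω).det) ^ 2 ∂μ
      = ((n.factorial : ℝ) / ((n - m).factorial : ℝ))
        * (((n + 2).factorial : ℝ) / ((n + 2 - c).factorial : ℝ))
        * ((m - c).factorial : ℝ) :=
  second_moment_wishart_minor_representation_general μ hc hmn W Z hmeasW hmeasZ hindep hWdist hZdist
end

section
/- Let W ~ W_r(n, I_r) be a standard Wishart matrix, i.e., W = X Xᵀ where X is an r×n matrix of i.i.d. standard Gaussian entries, with n ≥ m. Then for any m-subsets I, J of {1,...,r}: E[det(W_{I×J})] = n!/(n−m)! if I = J, and E[det(W_{I×J})] = 0 if I ≠ J. -/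
/-!
Write `W_{IJ} = X_I X_Jᵀ`, where `X_I` consists of the rows of `X` indexed by `I`. Expanding the
determinant multilinearly in the columns of `X` gives a sum, over injective column choices
`k : Fin m ↪ Fin n` and permutations `σ`, of `sign σ · ∏_b X_{I(σ b), k b} X_{J b, k b}`.
Because `k` is injective the `m` factors live in distinct, hence independent, columns, and within a
column `E[X_{ij} X_{i'j}] = δ_{ii'}`. So every monomial has expectation `∏_b δ_{I(σ b), J b}`, and
`E det W_{IJ} = n (n - 1) ⋯ (n - m + 1) · det (1_r)_{IJ}`, where the last determinant is `1` if
`I = J` and has a zero column otherwise.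
-/

open Matrix Finset MeasureTheory ProbabilityTheory

namespace Matrix

variable {ι κ R : Type*} [Fintype ι] [DecidableEq ι] [Fintype κ] [DecidableEq κ] [CommRing R]

theorem det_mul_transpose_eq_sum_embedding (A B : Matrix ι κ R) :
    (A * Bᵀ).det = ∑ k : ι ↪ κ, ∑ σ : Equiv.Perm ι,
      ((Equiv.Perm.sign σ : ℤ) : R) * ∏ b, A (σ b) (k b) * B b (k b) := by
  let term (k : ι → κ) : R :=
    ∑ σ : Equiv.Perm ι, ((Equiv.Perm.sign σ : ℤ) : R) * ∏ b, A (σ b) (k b) * B b (k b)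
  have hterm : ∀ k, term k = (A.submatrix id k).det * ∏ b, B b (k b) := fun k ↦ by
    simp only [term, det_apply', submatrix_apply, id, prod_mul_distrib, sum_mul, mul_assoc]
  calc (A * Bᵀ).det = ∑ k : ι → κ, term k := by
        simp only [term, det_apply', mul_apply, transpose_apply, prod_univ_sum, mul_sum,
          Fintype.piFinset_univ]
        exact sum_comm
    _ = ∑ k ∈ univ.filter Function.Injective, term k := by
        refine (sum_subset (filter_subset _ _) fun k _ hk ↦ ?_).symm
        obtain ⟨a, b, hab, hne⟩ : ∃ a b, k a = k b ∧ a ≠ b := by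
          simpa [Function.Injective] using hk
        rw [hterm, det_zero_of_column_eq hne fun i ↦ by simp [hab], zero_mul]
    _ = ∑ k : ι ↪ κ, term k := by
        rw [sum_subtype _ fun _ ↦ mem_filter_univ _]
        exact Fintype.sum_equiv (Equiv.subtypeInjectiveEquivEmbedding ι κ) _ _ fun _ ↦ rfl

end Matrix

namespace ProbabilityTheory

variable {Ω : Type*} {mΩ : MeasurableSpace Ω} {μ : Measure Ω}

lemma iIndepFun.curry {ι κ 𝓧 : Type*} [MeasurableSpace 𝓧] {X : ι → κ → Ω → 𝓧}
    (mX : ∀ i j, Measurable (X i j)) (h : iIndepFun (fun (p : ι × κ) ω ↦ X p.1 p.2 ω) μ) :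
    iIndepFun (fun i ω j ↦ X i j ω) μ := by
  have := h.isProbabilityMeasure
  have : ∀ i j, IsProbabilityMeasure (μ.map (X i j)) :=
    fun i j ↦ Measure.isProbabilityMeasure_map (mX i j).aemeasurable
  have hjoint : μ.map (fun ω (p : ι × κ) ↦ X p.1 p.2 ω) =
      Measure.infinitePi fun p ↦ μ.map (X p.1 p.2) :=
    h.map_fun_eq_infinitePi_map fun p ↦ mX p.1 p.2
  have hrow : ∀ i, μ.map (fun ω j ↦ X i j ω) = Measure.infinitePi fun j ↦ μ.map (X i j) :=
    fun i ↦ (h.precomp (Prod.mk_right_injective i)).map_fun_eq_infinitePi_map fun j ↦ mX i j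
  rw [iIndepFun_iff_map_fun_eq_infinitePi_map fun i ↦ measurable_pi_iff.2 (mX i)]
  simp only [hrow]
  rw [← Measure.infinitePi_map_curry, ← hjoint, Measure.map_map (by fun_prop) (by fun_prop)]
  rfl

lemma iIndepFun.integrable_fun_prod {ι 𝕜 : Type*} [Fintype ι] [RCLike 𝕜] {X : ι → Ω → 𝕜}
    (hX : iIndepFun X μ) (mX : ∀ i, Measurable (X i)) (hint : ∀ i, Integrable (X i) μ) :
    Integrable (fun ω ↦ ∏ i, X i ω) μ := by
  refine ⟨Finset.aestronglyMeasurable_fun_prod _ fun i _ ↦ (mX i).aestronglyMeasurable, ?_⟩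
  have hlintegral := lintegral_prod_eq_prod_lintegral_of_indepFun univ (fun i ω ↦ ‖X i ω‖ₑ)
    (hX.comp (fun _ ↦ (‖·‖ₑ)) fun _ ↦ measurable_enorm) fun i ↦ (mX i).enorm
  have henorm : ∀ ω, ‖∏ i, X i ω‖ₑ = ∏ i, ‖X i ω‖ₑ := fun ω ↦ by
    simp [enorm_eq_nnnorm, nnnorm_prod]
  simp only [HasFiniteIntegral, henorm, hlintegral]
  exact ENNReal.prod_lt_top fun i _ ↦ (hint i).2

lemma HasLaw.memLp_of_gaussianReal {Y : Ω → ℝ} {m : ℝ} {v : NNReal}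
    (hY : HasLaw Y (gaussianReal m v) μ) {p : ENNReal} (hp : p ≠ ⊤) : MemLp Y p μ := by
  have := memLp_id_gaussianReal' (μ := m) (v := v) p hp
  rw [← hY.map_eq] at this
  exact (memLp_map_measure_iff aestronglyMeasurable_id hY.aemeasurable).1 this

lemma iIndepFun.integral_mul_eq_ite_of_gaussianReal {ι : Type*} [DecidableEq ι]
    {X : ι → Ω → ℝ} (hX : iIndepFun X μ) (hlaw : ∀ i, HasLaw (X i) (gaussianReal 0 1) μ)
    (i j : ι) : ∫ ω, X i ω * X j ω ∂μ = if i = j then 1 else 0 := by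
  have hmean : ∀ i, μ[X i] = 0 := fun i ↦ (hlaw i).integral_eq.trans integral_id_gaussianReal
  split_ifs with hij
  · subst hij
    calc ∫ ω, X i ω * X i ω ∂μ = ∫ ω, X i ω ^ 2 ∂μ := by simp_rw [sq]
      _ = Var[X i; μ] := (variance_of_integral_eq_zero (hlaw i).aemeasurable (hmean i)).symm
      _ = 1 := by rw [(hlaw i).variance_eq, variance_id_gaussianReal]; rfl
  · rw [(hX.indepFun hij).integral_fun_mul_eq_mul_integral
      (hlaw i).aemeasurable.aestronglyMeasurable (hlaw j).aemeasurable.aestronglyMeasurable,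
      hmean i, zero_mul]

structure IsStdGaussianMatrix {ρ κ : Type*} (μ : Measure Ω) (X : Ω → Matrix ρ κ ℝ) : Prop where
  measurable_entry : ∀ i j, Measurable fun ω ↦ X ω i j
  iIndepFun_entries : iIndepFun (fun (p : ρ × κ) ω ↦ X ω p.1 p.2) μ
  map_entry : ∀ p : ρ × κ, μ.map (fun ω ↦ X ω p.1 p.2) = gaussianReal 0 1

namespace IsStdGaussianMatrix

variable {ρ κ : Type*} {X : Ω → Matrix ρ κ ℝ} (hX : IsStdGaussianMatrix μ X)
include hX

lemma hasLaw_entry (p : ρ × κ) : HasLaw (fun ω ↦ X ω p.1 p.2) (gaussianReal 0 1) μ :=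
  ⟨(hX.measurable_entry p.1 p.2).aemeasurable, hX.map_entry p⟩

lemma iIndepFun_cols : iIndepFun (fun j ω i ↦ X ω i j) μ :=
  (hX.iIndepFun_entries.precomp (Equiv.prodComm κ ρ).injective).curry
    fun j i ↦ hX.measurable_entry i j

lemma integrable_entry_mul_entry (i i' : ρ) (j j' : κ) :
    Integrable (fun ω ↦ X ω i j * X ω i' j') μ :=
  ((hX.hasLaw_entry (i, j)).memLp_of_gaussianReal (p := 2) ENNReal.ofNat_ne_top).integrable_mul
    ((hX.hasLaw_entry (i', j')).memLp_of_gaussianReal (p := 2) ENNReal.ofNat_ne_top)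

lemma integral_entry_mul_entry [DecidableEq ρ] (i i' : ρ) (j : κ) :
    ∫ ω, X ω i j * X ω i' j ∂μ = if i = i' then 1 else 0 := by
  classical
  simpa using
    hX.iIndepFun_entries.integral_mul_eq_ite_of_gaussianReal hX.hasLaw_entry (i, j) (i', j)

variable {ι : Type*}

lemma iIndepFun_entry_mul_entry (u v : ι → ρ) (k : ι ↪ κ) :
    iIndepFun (fun b ω ↦ X ω (u b) (k b) * X ω (v b) (k b)) μ :=
  (hX.iIndepFun_cols.precomp k.injective).comp (fun b c ↦ c (u b) * c (v b)) fun _ ↦ by fun_prop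

variable [Fintype ι]

lemma integrable_prod_entry_mul_entry (u v : ι → ρ) (k : ι ↪ κ) :
    Integrable (fun ω ↦ ∏ b, X ω (u b) (k b) * X ω (v b) (k b)) μ :=
  (hX.iIndepFun_entry_mul_entry u v k).integrable_fun_prod
    (fun _ ↦ (hX.measurable_entry _ _).mul (hX.measurable_entry _ _))
    fun _ ↦ hX.integrable_entry_mul_entry _ _ _ _

lemma integral_prod_entry_mul_entry [DecidableEq ρ] (u v : ι → ρ) (k : ι ↪ κ) :
    ∫ ω, ∏ b, X ω (u b) (k b) * X ω (v b) (k b) ∂μ = ∏ b, if u b = v b then 1 else 0 := by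
  rw [(hX.iIndepFun_entry_mul_entry u v k).integral_fun_prod_eq_prod_integral
    fun _ ↦ (hX.integrable_entry_mul_entry _ _ _ _).aestronglyMeasurable]
  exact prod_congr rfl fun _ _ ↦ hX.integral_entry_mul_entry _ _ _

theorem integral_det_submatrix_mul_transpose_self [DecidableEq ι] [Fintype κ] [DecidableEq κ]
    [DecidableEq ρ] (u v : ι → ρ) :
    ∫ ω, ((X ω * (X ω)ᵀ).submatrix u v).det ∂μ =
      (Fintype.card κ).descFactorial (Fintype.card ι) * ((1 : Matrix ρ ρ ℝ).submatrix u v).det := by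
  have hexpand : ∀ ω, ((X ω * (X ω)ᵀ).submatrix u v).det = ∑ k : ι ↪ κ, ∑ σ : Equiv.Perm ι,
      ((Equiv.Perm.sign σ : ℤ) : ℝ) * ∏ b, X ω (u (σ b)) (k b) * X ω (v b) (k b) := fun ω ↦ by
    rw [submatrix_mul _ _ _ id _ Function.bijective_id, ← transpose_submatrix,
      det_mul_transpose_eq_sum_embedding]
    rfl
  simp_rw [hexpand]
  rw [integral_finsetSum _ fun k _ ↦ integrable_finsetSum _ fun σ _ ↦
    (hX.integrable_prod_entry_mul_entry _ _ k).const_mul _]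
  simp_rw [integral_finsetSum _ fun σ _ ↦ (hX.integrable_prod_entry_mul_entry _ _ _).const_mul _,
    integral_const_mul, hX.integral_prod_entry_mul_entry]
  rw [sum_const, card_univ, Fintype.card_embedding_eq, nsmul_eq_mul, det_apply']
  simp [one_apply]

end IsStdGaussianMatrix

end ProbabilityTheory

theorem expectation_minor_standard_wishart_general
    {Ω : Type*} [MeasurableSpace Ω] (μ : Measure Ω)
    {r n m : ℕ} (hmn : m ≤ n)
    (X : Ω → Matrix (Fin r) (Fin n) ℝ)
    (hmeas : ∀ (i : Fin r) (j : Fin n), Measurable fun ω => X ω i j)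
    (hindep : iIndepFun
      (fun (p : Fin r × Fin n) ω => X ω p.1 p.2) μ)
    (hdist : ∀ p : Fin r × Fin n,
      Measure.map (fun ω => X ω p.1 p.2) μ = gaussianReal 0 1)
    (I J : Finset (Fin r)) (hI : I.card = m) (hJ : J.card = m) :
    (I = J →
      ∫ ω, ((X ω * (X ω)ᵀ).submatrix (I.orderEmbOfFin hI) (J.orderEmbOfFin hJ)).det ∂μ
        = (n.factorial : ℝ) / ((n - m).factorial : ℝ)) ∧
    (I ≠ J →
      ∫ ω, ((X ω * (X ω)ᵀ).submatrix (I.orderEmbOfFin hI) (J.orderEmbOfFin hJ)).det ∂μ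
        = 0) := by
  have hX : IsStdGaussianMatrix μ X := ⟨hmeas, hindep, hdist⟩
  rw [hX.integral_det_submatrix_mul_transpose_self, Fintype.card_fin, Fintype.card_fin]
  refine ⟨?_, fun hIJ ↦ ?_⟩
  · rintro rfl
    rw [submatrix_one _ (I.orderEmbOfFin hI).injective, det_one, mul_one,
      Nat.descFactorial_eq_div hmn,
      Nat.cast_div (Nat.factorial_dvd_factorial (Nat.sub_le n m)) (by positivity)]
  · obtain ⟨x, hxJ, hxI⟩ := not_subset.mp fun hJI ↦
      hIJ (eq_of_subset_of_card_le hJI (by rw [hI, hJ])).symm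
    obtain ⟨b, rfl⟩ : x ∈ Set.range (J.orderEmbOfFin hJ) := by rwa [range_orderEmbOfFin]
    refine mul_eq_zero_of_right _ (det_eq_zero_of_column_eq_zero b fun a ↦ ?_)
    rw [submatrix_apply, one_apply_ne]
    exact fun h ↦ hxI (h ▸ orderEmbOfFin_mem I hI a)

theorem expectation_minor_standard_wishart
    {Ω : Type*} [MeasurableSpace Ω] (μ : Measure Ω) [IsProbabilityMeasure μ]
    {r n m : ℕ} (hmn : m ≤ n)
    (X : Ω → Matrix (Fin r) (Fin n) ℝ)
    (hmeas : ∀ (i : Fin r) (j : Fin n), Measurable fun ω => X ω i j)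
    (hindep : iIndepFun
      (fun (p : Fin r × Fin n) ω => X ω p.1 p.2) μ)
    (hdist : ∀ p : Fin r × Fin n,
      Measure.map (fun ω => X ω p.1 p.2) μ = gaussianReal 0 1)
    (I J : Finset (Fin r)) (hI : I.card = m) (hJ : J.card = m) :
    (I = J →
      ∫ ω, ((X ω * (X ω)ᵀ).submatrix (I.orderEmbOfFin hI) (J.orderEmbOfFin hJ)).det ∂μ
        = (n.factorial : ℝ) / ((n - m).factorial : ℝ)) ∧
    (I ≠ J →
      ∫ ω, ((X ω * (X ω)ᵀ).submatrix (I.orderEmbOfFin hI) (J.orderEmbOfFin hJ)).det ∂μ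
        = 0) :=
  expectation_minor_standard_wishart_general μ hmn X hmeas hindep hdist I J hI hJ
end

section
/- For m = 2 and a 4×4 symmetric positive definite matrix Σ with 2×2 blocks Σ_{II}, Σ_{IJ}, Σ_{JI} = Σ_{IJ}ᵀ, Σ_{JJ}, and Σ^{IJ} the I×J block of Σ^{-1}, one has the identity: tr(Σ_{JI} Σ^{IJ}) · det(Σ) = det(Σ) − det(Σ_{II}) det(Σ_{JJ}) + det(Σ_{IJ})², where det(Σ) denotes the determinant of the full 4×4 matrix Σ_{(I∪J)×(I∪J)}. -/
open Matrix

theorem det_fin_four' (A : Matrix (Fin 4) (Fin 4) ℝ) :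
    A.det =
      A 0 0 * (A 1 1 * (A 2 2 * A 3 3 - A 2 3 * A 3 2) - A 1 2 * (A 2 1 * A 3 3 - A 2 3 * A 3 1) + A 1 3 * (A 2 1 * A 3 2 - A 2 2 * A 3 1))
    - A 0 1 * (A 1 0 * (A 2 2 * A 3 3 - A 2 3 * A 3 2) - A 1 2 * (A 2 0 * A 3 3 - A 2 3 * A 3 0) + A 1 3 * (A 2 0 * A 3 2 - A 2 2 * A 3 0))
    + A 0 2 * (A 1 0 * (A 2 1 * A 3 3 - A 2 3 * A 3 1) - A 1 1 * (A 2 0 * A 3 3 - A 2 3 * A 3 0) + A 1 3 * (A 2 0 * A 3 1 - A 2 1 * A 3 0))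
    - A 0 3 * (A 1 0 * (A 2 1 * A 3 2 - A 2 2 * A 3 1) - A 1 1 * (A 2 0 * A 3 2 - A 2 2 * A 3 0) + A 1 2 * (A 2 0 * A 3 1 - A 2 1 * A 3 0)) := by
  rw [Matrix.det_succ_row_zero]
  simp [Fin.sum_univ_succ, Matrix.det_fin_three, Fin.succ_ne_zero,
    show (Fin.succ 2 : Fin 4) = 3 from rfl,
    show Fin.succAbove (1:Fin 4) 2 = 3 from rfl,
    show Fin.succAbove (2:Fin 4) 2 = 3 from rfl,
    show (Fin.castSucc 2 : Fin 4) = 2 from rfl,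
    show Fin.succAbove (3:Fin 4) 2 = 2 from rfl]
  ring

theorem det_sum4 (A : Matrix (Fin 2 ⊕ Fin 2) (Fin 2 ⊕ Fin 2) ℝ) :
    A.det =
        A (Sum.inl 0) (Sum.inl 0) * (A (Sum.inl 1) (Sum.inl 1) * (A (Sum.inr 0) (Sum.inr 0) * A (Sum.inr 1) (Sum.inr 1) - A (Sum.inr 0) (Sum.inr 1) * A (Sum.inr 1) (Sum.inr 0)) - A (Sum.inl 1) (Sum.inr 0) * (A (Sum.inr 0) (Sum.inl 1) * A (Sum.inr 1) (Sum.inr 1) - A (Sum.inr 0) (Sum.inr 1) * A (Sum.inr 1) (Sum.inl 1)) + A (Sum.inl 1) (Sum.inr 1) * (A (Sum.inr 0) (Sum.inl 1) * A (Sum.inr 1) (Sum.inr 0) - A (Sum.inr 0) (Sum.inr 0) * A (Sum.inr 1) (Sum.inl 1)))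
      - A (Sum.inl 0) (Sum.inl 1) * (A (Sum.inl 1) (Sum.inl 0) * (A (Sum.inr 0) (Sum.inr 0) * A (Sum.inr 1) (Sum.inr 1) - A (Sum.inr 0) (Sum.inr 1) * A (Sum.inr 1) (Sum.inr 0)) - A (Sum.inl 1) (Sum.inr 0) * (A (Sum.inr 0) (Sum.inl 0) * A (Sum.inr 1) (Sum.inr 1) - A (Sum.inr 0) (Sum.inr 1) * A (Sum.inr 1) (Sum.inl 0)) + A (Sum.inl 1) (Sum.inr 1) * (A (Sum.inr 0) (Sum.inl 0) * A (Sum.inr 1) (Sum.inr 0) - A (Sum.inr 0) (Sum.inr 0) * A (Sum.inr 1) (Sum.inl 0)))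
      + A (Sum.inl 0) (Sum.inr 0) * (A (Sum.inl 1) (Sum.inl 0) * (A (Sum.inr 0) (Sum.inl 1) * A (Sum.inr 1) (Sum.inr 1) - A (Sum.inr 0) (Sum.inr 1) * A (Sum.inr 1) (Sum.inl 1)) - A (Sum.inl 1) (Sum.inl 1) * (A (Sum.inr 0) (Sum.inl 0) * A (Sum.inr 1) (Sum.inr 1) - A (Sum.inr 0) (Sum.inr 1) * A (Sum.inr 1) (Sum.inl 0)) + A (Sum.inl 1) (Sum.inr 1) * (A (Sum.inr 0) (Sum.inl 0) * A (Sum.inr 1) (Sum.inl 1) - A (Sum.inr 0) (Sum.inl 1) * A (Sum.inr 1) (Sum.inl 0)))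
      - A (Sum.inl 0) (Sum.inr 1) * (A (Sum.inl 1) (Sum.inl 0) * (A (Sum.inr 0) (Sum.inl 1) * A (Sum.inr 1) (Sum.inr 0) - A (Sum.inr 0) (Sum.inr 0) * A (Sum.inr 1) (Sum.inl 1)) - A (Sum.inl 1) (Sum.inl 1) * (A (Sum.inr 0) (Sum.inl 0) * A (Sum.inr 1) (Sum.inr 0) - A (Sum.inr 0) (Sum.inr 0) * A (Sum.inr 1) (Sum.inl 0)) + A (Sum.inl 1) (Sum.inr 0) * (A (Sum.inr 0) (Sum.inl 0) * A (Sum.inr 1) (Sum.inl 1) - A (Sum.inr 0) (Sum.inl 1) * A (Sum.inr 1) (Sum.inl 0)))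
 := by
  rw [← Matrix.det_reindex_self finSumFinEquiv A, det_fin_four']
  rfl

set_option maxHeartbeats 1600000 in
theorem tetrad_trace_identity
    (S : Matrix (Fin 2 ⊕ Fin 2) (Fin 2 ⊕ Fin 2) ℝ) (hS : S.PosDef)
    (hsymm : S.toBlocks₂₁ = (S.toBlocks₁₂)ᵀ) :
    Matrix.trace (S.toBlocks₂₁ * (S⁻¹).toBlocks₁₂) * S.det
      = S.det - (S.toBlocks₁₁).det * (S.toBlocks₂₂).det + ((S.toBlocks₁₂).det) ^ 2 := by
  have hdet : S.det ≠ 0 := hS.det_pos.ne'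
  have hs : ∀ i j, S (Sum.inr i) (Sum.inl j) = S (Sum.inl j) (Sum.inr i) :=
    fun i j => congrFun (congrFun hsymm i) j
  have hinv : (S⁻¹).toBlocks₁₂ = S.det⁻¹ • (S.adjugate).toBlocks₁₂ := by
    rw [Matrix.inv_def]; ext i j; simp [Matrix.toBlocks₁₂]
  rw [hinv, Matrix.mul_smul, Matrix.trace_smul, smul_eq_mul,
    mul_comm _ S.det, ← mul_assoc, mul_inv_cancel₀ hdet, one_mul]
  have hadj : ∀ i j, S.adjugate (Sum.inl i) (Sum.inr j)
      = (S.updateRow (Sum.inr j) (Pi.single (Sum.inl i) 1)).det :=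
    fun i j => Matrix.adjugate_apply _ _ _
  simp only [Matrix.trace_fin_two, Fin.sum_univ_two, Matrix.mul_apply,
    Matrix.smul_apply, smul_eq_mul, Matrix.toBlocks₁₂, Matrix.toBlocks₂₁,
    Matrix.toBlocks₁₁, Matrix.toBlocks₂₂, Matrix.of_apply, Matrix.det_fin_two, hadj]
  simp only [det_sum4, Matrix.updateRow_apply, Pi.single_apply]
  simp
  simp only [hs]
  ring
end
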